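/- arXiv:2504.16437 — 2 statements merged into one kernel-verified Lean document; each statement's English description precedes it below -/
import Mathlib

section
/- Let V_A, V_B : {0,1}^d → S_{3d} be the vector gadget functions satisfying LCS(V_A(a), V_B(b)) = 2d − ⟨a,b⟩. Let P be the string (3d+1)(3d+2)⋯(3d+2d−1) of length 2d−1, and define N_A(a) := P ∘ V_A(a) and N_B(b) := V_B(b) ∘ P. Then for all a, b ∈ {0,1}^d: LCS(N_A(a), N_B(b)) = 2d if ⟨a, b⟩ = 0, and LCS(N_A(a), N_B(b)) = 2d − 1 if ⟨a, b⟩ ≠ 0. -/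
/-- Length of a longest common subsequence of two strings (lists over ℕ). -/
noncomputable def LCS (x y : List ℕ) : ℕ :=
  sSup {k | ∃ s : List ℕ, s.Sublist x ∧ s.Sublist y ∧ s.length = k}

/-- Ulam distance between permutations, via `d_U(σ,τ) = |σ| − LCS(σ,τ)`. -/
noncomputable def ulamDist (x y : List ℕ) : ℕ := x.length - LCS x y

/-- `π` is a permutation of `[n] = {1,…,n}` viewed as a string. -/
def IsPermOf (n : ℕ) (π : List ℕ) : Prop := π.Perm (List.range' 1 n)

lemma LCS_zero_mem (x y : List ℕ) :
    0 ∈ {k | ∃ s : List ℕ, s.Sublist x ∧ s.Sublist y ∧ s.length = k} :=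
  ⟨[], List.nil_sublist _, List.nil_sublist _, rfl⟩

lemma LCS_bdd (x y : List ℕ) :
    BddAbove {k | ∃ s : List ℕ, s.Sublist x ∧ s.Sublist y ∧ s.length = k} :=
  ⟨x.length, fun _ ⟨s, hx, _, hl⟩ => hl ▸ hx.length_le⟩

lemma le_LCS {x y s : List ℕ} (hx : s.Sublist x) (hy : s.Sublist y) :
    s.length ≤ LCS x y :=
  le_csSup (LCS_bdd x y) ⟨s, hx, hy, rfl⟩

lemma LCS_le {x y : List ℕ} {m : ℕ}
    (h : ∀ s : List ℕ, s.Sublist x → s.Sublist y → s.length ≤ m) : LCS x y ≤ m :=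
  csSup_le ⟨0, LCS_zero_mem x y⟩ (fun _ ⟨s, hx, hy, hl⟩ => hl ▸ h s hx hy)

lemma LCS_witness (x y : List ℕ) :
    ∃ s : List ℕ, s.Sublist x ∧ s.Sublist y ∧ s.length = LCS x y :=
  Nat.sSup_mem ⟨0, LCS_zero_mem x y⟩ (LCS_bdd x y)

theorem normalized_vector_gadgets (d : ℕ)
    (VA VB : (Fin d → Fin 2) → List ℕ)
    (hVA : ∀ a, IsPermOf (3 * d) (VA a)) (hVB : ∀ b, IsPermOf (3 * d) (VB b))
    (hLCS : ∀ a b, LCS (VA a) (VB b) = 2 * d - ∑ i, (a i : ℕ) * (b i : ℕ))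
    (P : List ℕ) (hP : P = (List.range (2 * d - 1)).map fun i => 3 * d + i + 1)
    (a b : Fin d → Fin 2) :
    ((∑ i, (a i : ℕ) * (b i : ℕ)) = 0 → LCS (P ++ VA a) (VB b ++ P) = 2 * d) ∧
    ((∑ i, (a i : ℕ) * (b i : ℕ)) ≠ 0 → LCS (P ++ VA a) (VB b ++ P) = 2 * d - 1) := by
  set k := ∑ i, (a i : ℕ) * (b i : ℕ) with hk
  have hPlen : P.length = 2 * d - 1 := by subst hP; simp
  have hPmem : ∀ x ∈ P, 3 * d < x := by
    intro x hx
    subst hP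
    obtain ⟨i, hi, rfl⟩ := List.mem_map.mp hx
    omega
  have hVAmem : ∀ x ∈ VA a, x ≤ 3 * d := by
    intro x hx
    have := List.mem_range'.mp ((hVA a).mem_iff.mp hx)
    omega
  have hVBmem : ∀ x ∈ VB b, x ≤ 3 * d := by
    intro x hx
    have := List.mem_range'.mp ((hVB b).mem_iff.mp hx)
    omega
  -- upper bound
  have upper : ∀ s : List ℕ, s.Sublist (P ++ VA a) → s.Sublist (VB b ++ P) →
      s.length ≤ max (2 * d - 1) (2 * d - k) := by
    intro s hs ht
    obtain ⟨s1, s2, rfl, hs1, hs2⟩ := List.sublist_append_iff.mp hs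
    obtain ⟨t1, t2, heq, ht1, ht2⟩ := List.sublist_append_iff.mp ht
    rcases s1 with _ | ⟨x, s1⟩
    · -- s = s2 ⊆ VA a ; then t2 = []
      have ht2nil : t2 = [] := by
        rcases t2 with _ | ⟨y, t2⟩
        · rfl
        · exfalso
          have hy2 : y ∈ s2 := by
            have : y ∈ t1 ++ y :: t2 := by simp
            rw [← heq] at this
            simpa using this
          have h1 := hVAmem y (hs2.subset hy2)
          have h2 := hPmem y (ht2.subset (by simp))
          omega
      subst ht2nil
      simp only [List.nil_append, List.append_nil] at heq
      have hle := le_LCS hs2 (heq ▸ ht1)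
      rw [hLCS a b, ← hk] at hle
      exact le_max_of_le_right hle
    · -- head of s is in P, so t1 = []
      have ht1nil : t1 = [] := by
        rcases t1 with _ | ⟨y, t1⟩
        · rfl
        · exfalso
          have hxy : x = y := by
            have := heq
            simp only [List.cons_append] at this
            exact (List.cons.injEq _ _ _ _ ▸ this).1
          have h1 := hPmem x (hs1.subset (by simp))
          have h2 := hVBmem y (ht1.subset (by simp))
          omega
      subst ht1nil
      simp only [List.nil_append] at heq
      have : ((x :: s1) ++ s2).length ≤ P.length := heq ▸ ht2.length_le
      rw [hPlen] at this
      exact le_max_of_le_left this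
  -- lower bounds
  have lowP : 2 * d - 1 ≤ LCS (P ++ VA a) (VB b ++ P) := by
    have := le_LCS (List.sublist_append_left P (VA a)) (List.sublist_append_right (VB b) P)
    omega
  obtain ⟨w, hwA, hwB, hwlen⟩ := LCS_witness (VA a) (VB b)
  have lowW : 2 * d - k ≤ LCS (P ++ VA a) (VB b ++ P) := by
    have hle := le_LCS (hwA.trans (List.sublist_append_right P (VA a)))
      (hwB.trans (List.sublist_append_left (VB b) P))
    rw [hwlen, hLCS a b, ← hk] at hle
    exact hle
  have hub := LCS_le upper
  constructor
  · intro h0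
    have h1 : max (2 * d - 1) (2 * d - k) ≤ 2 * d := max_le (by omega) (by omega)
    omega
  · intro h0
    have h1 : max (2 * d - 1) (2 * d - k) ≤ 2 * d - 1 := max_le le_rfl (by omega)
    omega
end

section
/- Let π, π' ∈ S_n be permutations with the same last symbol x (π[n] = π'[n] = x). Then any permutation π* ∈ S_n minimizing d_U(π*, π) + d_U(π*, π') satisfies π*[n] = x. -/
/-!
Write `π = ρ x`, `π' = ρ' x` and suppose the median `π*` does not end in `x`. Moving `x` to the
end of `π*` never shortens a common subsequence with `ρ x` or `ρ' x`, since such a subsequence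
either avoids `x` or ends in it. So if a longest common subsequence of `π*` and `π` avoids `x`,
the move gains one on that side and loses nothing on the other, contradicting minimality; likewise
for `π'`. Otherwise the two longest common subsequences are `t x` and `t' x` with `t`, `t'` inside
the prefix `A` of `π*` before `x`. They share a subsequence `w` with `|w| ≥ |t| + |t'| - |A|`, and
`w x` is common to `π` and `π'`. Comparing `π*` with `σ = π` then forces `|A| ≥ n - 1`,
impossible as `x` is not last.
-/

namespace List

variable {α : Type*}

theorem exists_common_sublist_length_add_le {a u v : List α} (hu : u <+ a) (hv : v <+ a) :
    ∃ w, w <+ u ∧ w <+ v ∧ u.length + v.length ≤ a.length + w.length := by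
  induction a generalizing u v with
  | nil =>
    obtain rfl := sublist_nil.mp hu
    obtain rfl := sublist_nil.mp hv
    exact ⟨[], .slnil, .slnil, le_rfl⟩
  | cons c a ih =>
    rcases sublist_cons_iff.mp hu with hu' | ⟨u', rfl, hu'⟩ <;>
      rcases sublist_cons_iff.mp hv with hv' | ⟨v', rfl, hv'⟩ <;>
      obtain ⟨w, hwu, hwv, hw⟩ := ih hu' hv'
    · exact ⟨w, hwu, hwv, by simp only [length_cons]; omega⟩
    · exact ⟨w, hwu, hwv.cons c, by simp only [length_cons]; omega⟩
    · exact ⟨w, hwu.cons c, hwv, by simp only [length_cons]; omega⟩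
    · exact ⟨c :: w, hwu.cons_cons c, hwv.cons_cons c, by simp only [length_cons]; omega⟩

theorem exists_eq_append_singleton_of_mem {s ρ : List α} {x : α} (hs : s <+ ρ ++ [x])
    (hxs : x ∈ s) (hxρ : x ∉ ρ) : ∃ t, s = t ++ [x] ∧ t <+ ρ := by
  obtain ⟨t, l, rfl, ht, hl⟩ := sublist_append_iff.mp hs
  rcases sublist_singleton.mp hl with rfl | rfl
  · exact absurd (ht.subset (by simpa using hxs)) hxρ
  · exact ⟨t, rfl, ht⟩

theorem sublist_of_append_singleton_sublist {t A B : List α} {x : α}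
    (h : t ++ [x] <+ A ++ x :: B) (hxB : x ∉ B) : t <+ A := by
  obtain ⟨r₁, r₂, hr, ht, hxr₂⟩ := append_sublist_iff.mp h
  have hxr₂ : x ∈ r₂ := singleton_sublist.mp hxr₂
  rcases append_eq_append_iff.mp hr with ⟨c, rfl, hc⟩ | ⟨c, rfl, -⟩
  · cases c with
    | nil => simpa using ht
    | cons d c =>
      obtain ⟨-, rfl⟩ := cons_eq_cons.mp hc
      exact absurd (mem_append_right c hxr₂) hxB
  · exact ht.trans (sublist_append_left r₁ c)

theorem exists_eq_append_cons_of_getLast?_ne {l : List α} {x : α} (hl : l.Nodup) (hx : x ∈ l)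
    (hlast : l.getLast? ≠ some x) : ∃ A B, l = A ++ x :: B ∧ x ∉ B ∧ B ≠ [] := by
  obtain ⟨A, B, rfl⟩ := append_of_mem hx
  refine ⟨A, B, rfl, (nodup_middle.mp hl).notMem ∘ mem_append_right A, ?_⟩
  rintro rfl
  exact hlast getLast?_concat

variable [DecidableEq α]

theorem sublist_erase_of_notMem {s l : List α} {x : α} (h : s <+ l) (hxs : x ∉ s) :
    s <+ l.erase x := by
  simpa [erase_of_not_mem hxs] using h.erase x

theorem sublist_erase_append_of_sublist {s l ρ : List α} {x : α} (hl : s <+ l)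
    (hρ : s <+ ρ ++ [x]) (hxρ : x ∉ ρ) : s <+ l.erase x ++ [x] := by
  by_cases hxs : x ∈ s
  · obtain ⟨t, rfl, htρ⟩ := exists_eq_append_singleton_of_mem hρ hxs hxρ
    exact (sublist_erase_of_notMem ((sublist_append_left t [x]).trans hl)
      fun hxt => hxρ (htρ.subset hxt)).append (Sublist.refl [x])
  · exact (sublist_erase_of_notMem hl hxs).trans (sublist_append_left _ _)

end List

open List

theorem LCS_bddAbove (a b : List ℕ) :
    BddAbove {k | ∃ s : List ℕ, s <+ a ∧ s <+ b ∧ s.length = k} :=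
  ⟨a.length, by rintro k ⟨s, hs, -, rfl⟩; exact hs.length_le⟩

theorem length_le_LCS {a b s : List ℕ} (ha : s <+ a) (hb : s <+ b) : s.length ≤ LCS a b :=
  le_csSup (LCS_bddAbove a b) ⟨s, ha, hb, rfl⟩

theorem exists_sublist_length_eq_LCS (a b : List ℕ) :
    ∃ s, s <+ a ∧ s <+ b ∧ s.length = LCS a b :=
  Nat.sSup_mem (s := {k | ∃ s : List ℕ, s <+ a ∧ s <+ b ∧ s.length = k})
    ⟨0, [], nil_sublist a, nil_sublist b, rfl⟩ (LCS_bddAbove a b)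

theorem LCS_le_length (a b : List ℕ) : LCS a b ≤ a.length := by
  obtain ⟨s, hs, -, hsl⟩ := exists_sublist_length_eq_LCS a b
  exact hsl ▸ hs.length_le

theorem LCS_self (a : List ℕ) : LCS a a = a.length :=
  (LCS_le_length a a).antisymm (length_le_LCS (.refl a) (.refl a))

theorem ulamDist_add_LCS (a b : List ℕ) : ulamDist a b + LCS a b = a.length :=
  Nat.sub_add_cancel (LCS_le_length a b)

theorem LCS_le_LCS_erase_append (l ρ : List ℕ) {x : ℕ} (hxρ : x ∉ ρ) :
    LCS l (ρ ++ [x]) ≤ LCS (l.erase x ++ [x]) (ρ ++ [x]) := by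
  obtain ⟨s, hl, hρ, hsl⟩ := exists_sublist_length_eq_LCS l (ρ ++ [x])
  exact hsl ▸ length_le_LCS (sublist_erase_append_of_sublist hl hρ hxρ) hρ

theorem LCS_lt_LCS_erase_append {s l ρ : List ℕ} {x : ℕ} (hl : s <+ l) (hρ : s <+ ρ ++ [x])
    (hsl : s.length = LCS l (ρ ++ [x])) (hxs : x ∉ s) :
    LCS l (ρ ++ [x]) < LCS (l.erase x ++ [x]) (ρ ++ [x]) := by
  have hsρ : s <+ ρ := hρ.of_sublist_append_left fun y hy hyx => hxs (mem_singleton.mp hyx ▸ hy :)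
  have := length_le_LCS ((sublist_erase_of_notMem hl hxs).append (.refl [x]))
    (hsρ.append (.refl [x]))
  simp only [length_append, length_singleton] at this
  omega

theorem length_add_length_le_LCS {s s' A B ρ ρ' : List ℕ} {x : ℕ} (hxB : x ∉ B)
    (hxρ : x ∉ ρ) (hxρ' : x ∉ ρ') (hs : s <+ A ++ x :: B) (hsρ : s <+ ρ ++ [x]) (hxs : x ∈ s)
    (hs' : s' <+ A ++ x :: B) (hsρ' : s' <+ ρ' ++ [x]) (hxs' : x ∈ s') :
    s.length + s'.length ≤ A.length + 1 + LCS (ρ ++ [x]) (ρ' ++ [x]) := by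
  obtain ⟨t, rfl, htρ⟩ := exists_eq_append_singleton_of_mem hsρ hxs hxρ
  obtain ⟨t', rfl, htρ'⟩ := exists_eq_append_singleton_of_mem hsρ' hxs' hxρ'
  obtain ⟨w, hwt, hwt', hw⟩ := exists_common_sublist_length_add_le
    (sublist_of_append_singleton_sublist hs hxB) (sublist_of_append_singleton_sublist hs' hxB)
  have := length_le_LCS ((hwt.trans htρ).append (.refl [x])) ((hwt'.trans htρ').append (.refl [x]))
  simp only [length_append, length_singleton] at this ⊢
  omega

theorem IsPermOf.length_eq {n : ℕ} {π : List ℕ} (h : IsPermOf n π) : π.length = n := by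
  simpa using List.Perm.length_eq h

theorem IsPermOf.nodup {n : ℕ} {π : List ℕ} (h : IsPermOf n π) : π.Nodup :=
  h.nodup_iff.mpr nodup_range'

theorem IsPermOf.perm {n : ℕ} {π σ : List ℕ} (hπ : IsPermOf n π) (hσ : IsPermOf n σ) : π ~ σ :=
  List.Perm.trans hπ (List.Perm.symm hσ)

theorem IsPermOf.erase_append {n x : ℕ} {π : List ℕ} (h : IsPermOf n π) (hx : x ∈ π) :
    IsPermOf n (π.erase x ++ [x]) :=
  ((perm_append_singleton x _).trans (perm_cons_erase hx).symm).trans h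

theorem IsPermOf.ulamDist_add_LCS {n : ℕ} {σ : List ℕ} (h : IsPermOf n σ) (τ : List ℕ) :
    ulamDist σ τ + LCS σ τ = n :=
  h.length_eq ▸ _root_.ulamDist_add_LCS σ τ

theorem LCS_add_LCS_le_of_median {n : ℕ} {π π' πs : List ℕ} (hπs : IsPermOf n πs)
    (hmedian : ∀ σ, IsPermOf n σ →
      ulamDist πs π + ulamDist πs π' ≤ ulamDist σ π + ulamDist σ π') :
    ∀ σ, IsPermOf n σ → LCS σ π + LCS σ π' ≤ LCS πs π + LCS πs π' := by
  intro σ hσ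
  have := hmedian σ hσ
  have := hσ.ulamDist_add_LCS π
  have := hσ.ulamDist_add_LCS π'
  have := hπs.ulamDist_add_LCS π
  have := hπs.ulamDist_add_LCS π'
  omega

theorem median_same_last_symbol (n : ℕ) (π π' : List ℕ)
    (hπ : IsPermOf n π) (hπ' : IsPermOf n π')
    (x : ℕ) (hlast : π.getLast? = some x) (hlast' : π'.getLast? = some x)
    (πs : List ℕ) (hπs : IsPermOf n πs)
    (hmedian : ∀ σ, IsPermOf n σ →
      ulamDist πs π + ulamDist πs π' ≤ ulamDist σ π + ulamDist σ π') :
    πs.getLast? = some x := by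
  obtain ⟨ρ, rfl⟩ := getLast?_eq_some_iff.mp hlast
  obtain ⟨ρ', rfl⟩ := getLast?_eq_some_iff.mp hlast'
  have hxρ : x ∉ ρ := ((nodup_concat ρ x).mp (by simpa using hπ.nodup)).1
  have hxρ' : x ∉ ρ' := ((nodup_concat ρ' x).mp (by simpa using hπ'.nodup)).1
  have hLCS := LCS_add_LCS_le_of_median hπs hmedian
  have hxπs : x ∈ πs := (hπ.perm hπs).subset (mem_append_right ρ (mem_singleton_self x))
  by_contra hlast_s
  obtain ⟨s, hs, hsρ, hsl⟩ := exists_sublist_length_eq_LCS πs (ρ ++ [x])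
  obtain ⟨s', hs', hsρ', hsl'⟩ := exists_sublist_length_eq_LCS πs (ρ' ++ [x])
  have hmove := hLCS _ (hπs.erase_append hxπs)
  by_cases hxs : x ∉ s
  · have := LCS_lt_LCS_erase_append hs hsρ hsl hxs
    have := LCS_le_LCS_erase_append πs ρ' hxρ'
    omega
  by_cases hxs' : x ∉ s'
  · have := LCS_lt_LCS_erase_append hs' hsρ' hsl' hxs'
    have := LCS_le_LCS_erase_append πs ρ hxρ
    omega
  obtain ⟨A, B, rfl, hxB, hB⟩ := exists_eq_append_cons_of_getLast?_ne hπs.nodup hxπs hlast_s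
  have hcommon := length_add_length_le_LCS hxB hxρ hxρ' hs hsρ (not_not.mp hxs) hs' hsρ'
    (not_not.mp hxs')
  have hvsπ := hLCS _ hπ
  rw [LCS_self, hπ.length_eq] at hvsπ
  have hn : A.length + (B.length + 1) = n := by simpa using hπs.length_eq
  have := length_pos_iff.mpr hB
  omega
end
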